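/- There exists a hypermagma with elements v₁, v₂, w₁, w₂ satisfying v₁ ⊞ v₂ = {v₁} and w₁ ⊞ w₂ = {w₁}, such that in the Nakamura–Reyes tensor product hypermagma (where (x⊗y) ⊞ (x'⊗y') = (x ⊞ x')⊗y if y = y', = x⊗(y ⊞ y') if x = x', their union if both, and ∅ if x ≠ x' and y ≠ y'), hyperaddition fails to be associative: ((v₁⊗w₁) ⊞ (v₁⊗w₂)) ⊞ ((v₂⊗w₁) ⊞ (v₂⊗w₂)) = {v₁⊗w₁}, while grouping as (v₁⊗w₁) ⊞ ((v₁⊗w₂) ⊞ (v₂⊗w₁)) ⊞ (v₂⊗w₂) yields ∅. -/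
import Mathlib
set_option synthInstance.maxSize 2000
set_option synthInstance.maxHeartbeats 1000000
set_option maxHeartbeats 1000000


/-- Elementwise extension of a hyperoperation to subsets (with `∅ ⊞ S = ∅`). -/
def setAdd {X : Type} (hadd : X → X → Set X) (S₁ S₂ : Set X) : Set X :=
  ⋃ s₁ ∈ S₁, ⋃ s₂ ∈ S₂, hadd s₁ s₂

/-- The Nakamura–Reyes tensor product hyperaddition on simple tensors
(modelled as pairs): `(x⊗y) ⊞ (x'⊗y')` is `(x ⊞ x')⊗y` if `y = y'`,
`x⊗(y ⊞ y')` if `x = x'`, their union if both, and `∅` if `x ≠ x'` and `y ≠ y'`. -/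
def nrAdd {M₁ M₂ : Type} (h₁ : M₁ → M₁ → Set M₁) (h₂ : M₂ → M₂ → Set M₂) :
    M₁ × M₂ → M₁ × M₂ → Set (M₁ × M₂) := fun p q =>
  {r | (p.2 = q.2 ∧ r.2 = p.2 ∧ r.1 ∈ h₁ p.1 q.1) ∨
       (p.1 = q.1 ∧ r.1 = p.1 ∧ r.2 ∈ h₂ p.2 q.2)}

/-- There exist hypermagmas `M₁, M₂` with elements `v₁ ≠ v₂`, `w₁ ≠ w₂`
satisfying `v₁ ⊞ v₂ = {v₁}` and `w₁ ⊞ w₂ = {w₁}`, such that hyperaddition in the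
Nakamura–Reyes tensor product fails to be associative:
`((v₁⊗w₁) ⊞ (v₁⊗w₂)) ⊞ ((v₂⊗w₁) ⊞ (v₂⊗w₂)) = {v₁⊗w₁}`, while
`(v₁⊗w₁) ⊞ ((v₁⊗w₂) ⊞ (v₂⊗w₁)) ⊞ (v₂⊗w₂) = ∅`. -/
theorem nakamura_reyes_not_associative :
    ∃ (M₁ M₂ : Type) (h₁ : M₁ → M₁ → Set M₁) (h₂ : M₂ → M₂ → Set M₂)
      (v₁ v₂ : M₁) (w₁ w₂ : M₂),
      v₁ ≠ v₂ ∧ w₁ ≠ w₂ ∧ h₁ v₁ v₂ = {v₁} ∧ h₂ w₁ w₂ = {w₁} ∧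
      setAdd (nrAdd h₁ h₂)
          (setAdd (nrAdd h₁ h₂) {(v₁, w₁)} {(v₁, w₂)})
          (setAdd (nrAdd h₁ h₂) {(v₂, w₁)} {(v₂, w₂)}) = {(v₁, w₁)} ∧
      setAdd (nrAdd h₁ h₂)
          (setAdd (nrAdd h₁ h₂) {(v₁, w₁)}
            (setAdd (nrAdd h₁ h₂) {(v₁, w₂)} {(v₂, w₁)}))
          {(v₂, w₂)} = (∅ : Set (M₁ × M₂)) := by
  refine ⟨Bool, Bool, fun _ _ => {true}, fun _ _ => {true},
    true, false, true, false, by decide, by decide, rfl, rfl, ?_, ?_⟩ <;>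
  · ext ⟨a, b⟩
    simp only [setAdd, nrAdd, Set.mem_iUnion, Set.mem_setOf_eq, Set.mem_singleton_iff,
      Set.mem_empty_iff_false, Prod.mk.injEq, Prod.ext_iff, exists_prop, Prod.exists]
    revert a b
    decide
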